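/- arXiv:1406.0569 — 4 statements merged into one kernel-verified Lean document; each statement's English description precedes it below -/
import Mathlib

section
/- Let X, Y be complex vector spaces with a sesquilinear pairing Ω : X × Y → ℂ, and let λ ⊆ X be a linear subspace. If the quotient (λ + Y^{Ω,l})/Y^{Ω,l} is finite-dimensional, then dim (λ + Y^{Ω,l})/Y^{Ω,l} = dim Y/λ^{Ω,r}, and λ + Y^{Ω,l} = (λ^{Ω,r})^{Ω,l}. -/
universe u

/-- The right annihilator `λ^{Ω,r} = {y ∈ Y : Ω(x,y) = 0 for all x ∈ λ}`. -/
noncomputable def rAnn {X Y : Type*} [AddCommGroup X] [Module ℂ X] [AddCommGroup Y] [Module ℂ Y]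
    (Ω : X →ₗ[ℂ] Y →ₗ⋆[ℂ] ℂ) (l : Submodule ℂ X) : Submodule ℂ Y :=
  ⨅ x ∈ l, LinearMap.ker (Ω x)

/-- The left annihilator `μ^{Ω,l} = {x ∈ X : Ω(x,y) = 0 for all y ∈ μ}`. -/
noncomputable def lAnn {X Y : Type*} [AddCommGroup X] [Module ℂ X] [AddCommGroup Y] [Module ℂ Y]
    (Ω : X →ₗ[ℂ] Y →ₗ⋆[ℂ] ℂ) (m : Submodule ℂ Y) : Submodule ℂ X where
  carrier := {x | ∀ y ∈ m, Ω x y = 0}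
  add_mem' := by
    intro a b ha hb y hy
    simp only [Set.mem_setOf_eq] at ha hb
    simp [map_add, LinearMap.add_apply, ha y hy, hb y hy]
  zero_mem' := by
    intro y hy
    simp
  smul_mem' := by
    intro c x hx y hy
    simp only [Set.mem_setOf_eq] at hx
    simp [map_smul, LinearMap.smul_apply, hx y hy]

/-!
Conjugating `Ω` turns `x ↦ Ω x` into a conjugate-linear map from `X` to the algebraic dual
`Y*`, whose kernel is `Y^{Ω,l}`. It carries `λ` onto a subspace `F ⊆ Y*` that is
conjugate-isomorphic to `(λ + Y^{Ω,l})/Y^{Ω,l}`, hence finite-dimensional, and `λ^{Ω,r}` is the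
common kernel `F°` of `F`. For a finite-dimensional `F ⊆ Y*` the quotient `Y/F°` is dual to `F`
and the functionals vanishing on `F°` are exactly `F`; pulling these two facts back to `X` gives
the dimension formula and `(λ^{Ω,r})^{Ω,l} = λ + Y^{Ω,l}`.
-/

universe v w

theorem lift_rank_map_mkQ_ker {R R₂ : Type*} {M : Type v} {M₂ : Type w} [Ring R] [Ring R₂]
    [AddCommGroup M] [Module R M] [AddCommGroup M₂] [Module R₂ M₂] {σ : R →+* R₂}
    {σ' : R₂ →+* R} [RingHomInvPair σ σ'] [RingHomInvPair σ' σ]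
    (f : M →ₛₗ[σ] M₂) (p : Submodule R M) :
    Cardinal.lift.{w} (Module.rank R (p.map (LinearMap.ker f).mkQ)) =
      Cardinal.lift.{v} (Module.rank R₂ (p.map f)) := by
  have hmap : (p.map (LinearMap.ker f).mkQ).map ((LinearMap.ker f).liftQ f le_rfl) = p.map f := by
    rw [← Submodule.map_comp, Submodule.liftQ_mkQ]
  have hinj : Function.Injective ((LinearMap.ker f).liftQ f le_rfl) :=
    LinearMap.ker_eq_bot.1 (Submodule.ker_liftQ_eq_bot _ _ le_rfl le_rfl)
  let e := (Submodule.equivMapOfInjective _ hinj _).trans (LinearEquiv.ofEq _ _ hmap)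
  exact lift_rank_eq_of_equiv_equiv σ e.toAddEquiv (Function.bijective_iff_has_inverse.2
    ⟨σ', fun _ ↦ RingHomInvPair.comp_apply_eq, fun _ ↦ RingHomInvPair.comp_apply_eq₂⟩)
    (map_smulₛₗ e)

theorem Subspace.lift_rank_quotient_dualCoannihilator {K : Type v} {V : Type w} [Field K]
    [AddCommGroup V] [Module K V] (W : Subspace K (Module.Dual K V)) [FiniteDimensional K W] :
    Cardinal.lift.{v} (Module.rank K (V ⧸ W.dualCoannihilator)) = Module.rank K W := by
  -- without it, instance search for `Module.Free K (Module.Dual K W)` times out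
  let _ : AddCommGroup W := inferInstance
  have := (LinearEquiv.ofBijective _ W.quotDualCoannihilatorToDual_bijective).lift_rank_eq
  rwa [Module.dual_rank_eq, Cardinal.lift_lift, Cardinal.lift_umax, Cardinal.lift_id] at this

section Pairing

variable {X Y : Type*} [AddCommGroup X] [Module ℂ X] [AddCommGroup Y] [Module ℂ Y]
  (Ω : X →ₗ[ℂ] Y →ₗ⋆[ℂ] ℂ)

noncomputable def conjDualMap : X →ₗ⋆[ℂ] Module.Dual ℂ Y where
  toFun x := (starLinearEquiv ℂ (A := ℂ)).toLinearMap ∘ₛₗ Ω x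
  map_add' _ _ := by ext; simp
  map_smul' _ _ := by ext; simp

@[simp]
theorem conjDualMap_apply (x : X) (y : Y) : conjDualMap Ω x y = starRingEnd ℂ (Ω x y) := rfl

theorem lAnn_eq_comap_conjDualMap (m : Submodule ℂ Y) :
    lAnn Ω m = m.dualAnnihilator.comap (conjDualMap Ω) := by
  ext x
  simp [lAnn, Submodule.mem_dualAnnihilator]

theorem lAnn_top_eq_ker_conjDualMap : lAnn Ω ⊤ = LinearMap.ker (conjDualMap Ω) := by
  rw [lAnn_eq_comap_conjDualMap, Submodule.dualAnnihilator_top]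
  rfl

theorem rAnn_eq_dualCoannihilator_map_conjDualMap (l : Submodule ℂ X) :
    rAnn Ω l = (l.map (conjDualMap Ω)).dualCoannihilator := by
  ext y
  simp [rAnn, Submodule.mem_dualCoannihilator]

end Pairing

/-- If `(λ + Y^{Ω,l})/Y^{Ω,l}` is finite-dimensional, then its dimension
equals `dim Y/λ^{Ω,r}`, and `λ + Y^{Ω,l} = (λ^{Ω,r})^{Ω,l}`. -/
theorem dim_quot_eq_and_double_ann {X Y : Type u}
    [AddCommGroup X] [Module ℂ X] [AddCommGroup Y] [Module ℂ Y]
    (Ω : X →ₗ[ℂ] Y →ₗ⋆[ℂ] ℂ) (l : Submodule ℂ X)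
    [FiniteDimensional ℂ ↥(l.map (lAnn Ω (⊤ : Submodule ℂ Y)).mkQ)] :
    Module.rank ℂ ↥(l.map (lAnn Ω (⊤ : Submodule ℂ Y)).mkQ)
      = Module.rank ℂ (Y ⧸ rAnn Ω l) ∧
    l ⊔ lAnn Ω (⊤ : Submodule ℂ Y) = lAnn Ω (rAnn Ω l) := by
  set F := l.map (conjDualMap Ω)
  have hrank := Cardinal.lift_inj.1 (lift_rank_map_mkQ_ker (conjDualMap Ω) l)
  rw [← lAnn_top_eq_ker_conjDualMap] at hrank
  have : FiniteDimensional ℂ F :=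
    Module.rank_lt_aleph0_iff.1 (hrank ▸ Module.rank_lt_aleph0 ℂ _)
  constructor
  · rw [hrank, rAnn_eq_dualCoannihilator_map_conjDualMap,
      ← Subspace.lift_rank_quotient_dualCoannihilator F, Cardinal.lift_uzero]
  · rw [lAnn_top_eq_ker_conjDualMap, lAnn_eq_comap_conjDualMap,
      rAnn_eq_dualCoannihilator_map_conjDualMap, Subspace.dualCoannihilator_dualAnnihilator_eq,
      Submodule.comap_map_eq]
end

section
/- Let X be a vector space and W₁ ⊆ W₂, λ, μ linear subspaces with W₁ ⊆ λ ⊆ W₂. For a subspace V set R(V) := (V ∩ W₂ + W₁)/W₁. Then (λ, μ) is a Fredholm pair of subspaces of X if and only if (R(λ), R(μ)) is a Fredholm pair in W₂/W₁, dim(μ ∩ W₁) < ∞ and dim X/(W₂+μ) < ∞; and in that case dim(R(λ)∩R(μ)) = dim(λ∩μ) − dim(μ∩W₁), dim(W₂/W₁)/(R(λ)+R(μ)) = dim X/(λ+μ) − dim X/(W₂+μ), and Index(R(λ),R(μ)) = Index(λ,μ) − dim(μ∩W₁) + dim X/(W₂+μ). -/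
open Submodule Module Cardinal

private theorem fd_iff_quot_sub {V : Type*} [AddCommGroup V] [Module ℂ V]
    (p : Submodule ℂ V) :
    FiniteDimensional ℂ V ↔ FiniteDimensional ℂ (V ⧸ p) ∧ FiniteDimensional ℂ p := by
  constructor
  · intro h
    exact ⟨inferInstance, inferInstance⟩
  · rintro ⟨h1, h2⟩
    have r1 := Module.rank_lt_aleph0_iff.mpr h1
    have r2 := Module.rank_lt_aleph0_iff.mpr h2
    exact Module.rank_lt_aleph0_iff.mp
      (by rw [← rank_quotient_add_rank_of_divisionRing p]; exact Cardinal.add_lt_aleph0 r1 r2)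

/-- Purely algebraic reduction lemma. Let `W₁ ⊆ W₂`, `λ`, `μ` be
subspaces of a vector space `X` with `W₁ ⊆ λ ⊆ W₂`, and for a subspace `V` let
`R(V) := (V ∩ W₂ + W₁)/W₁` (realized as the image of `V ∩ W₂ + W₁` in `X/W₁`).
Then `(λ,μ)` is a Fredholm pair in `X` iff `(R(λ),R(μ))` is a Fredholm pair in
`W₂/W₁`, `dim (μ ∩ W₁) < ∞` and `dim X/(W₂+μ) < ∞`; and in that case
`dim (R(λ)∩R(μ)) = dim(λ∩μ) − dim(μ∩W₁)`,
`dim (W₂/W₁)/(R(λ)+R(μ)) = dim X/(λ+μ) − dim X/(W₂+μ)` and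
`Index(R(λ),R(μ)) = Index(λ,μ) − dim(μ∩W₁) + dim X/(W₂+μ)`. -/
theorem reduction_fredholm_index {X : Type*} [AddCommGroup X] [Module ℂ X]
    (W₁ W₂ l m : Submodule ℂ X)
    (h12 : W₁ ≤ W₂) (hl1 : W₁ ≤ l) (hl2 : l ≤ W₂) :
    ((FiniteDimensional ℂ ↥(l ⊓ m) ∧ FiniteDimensional ℂ (X ⧸ (l ⊔ m))) ↔
      ((FiniteDimensional ℂ
          ↥((l ⊓ W₂ ⊔ W₁).map W₁.mkQ ⊓ (m ⊓ W₂ ⊔ W₁).map W₁.mkQ) ∧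
        FiniteDimensional ℂ
          ↥((W₂.map W₁.mkQ).map
              ((l ⊓ W₂ ⊔ W₁).map W₁.mkQ ⊔ (m ⊓ W₂ ⊔ W₁).map W₁.mkQ).mkQ)) ∧
       FiniteDimensional ℂ ↥(m ⊓ W₁) ∧
       FiniteDimensional ℂ (X ⧸ (W₂ ⊔ m)))) ∧
    ((FiniteDimensional ℂ ↥(l ⊓ m) ∧ FiniteDimensional ℂ (X ⧸ (l ⊔ m))) →
      (Module.finrank ℂ ↥((l ⊓ W₂ ⊔ W₁).map W₁.mkQ ⊓ (m ⊓ W₂ ⊔ W₁).map W₁.mkQ)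
          + Module.finrank ℂ ↥(m ⊓ W₁) = Module.finrank ℂ ↥(l ⊓ m) ∧
       Module.finrank ℂ
            ↥((W₂.map W₁.mkQ).map
                ((l ⊓ W₂ ⊔ W₁).map W₁.mkQ ⊔ (m ⊓ W₂ ⊔ W₁).map W₁.mkQ).mkQ)
          + Module.finrank ℂ (X ⧸ (W₂ ⊔ m)) = Module.finrank ℂ (X ⧸ (l ⊔ m)) ∧
       (Module.finrank ℂ ↥((l ⊓ W₂ ⊔ W₁).map W₁.mkQ ⊓ (m ⊓ W₂ ⊔ W₁).map W₁.mkQ) : ℤ)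
          - Module.finrank ℂ
              ↥((W₂.map W₁.mkQ).map
                  ((l ⊓ W₂ ⊔ W₁).map W₁.mkQ ⊔ (m ⊓ W₂ ⊔ W₁).map W₁.mkQ).mkQ)
        = (Module.finrank ℂ ↥(l ⊓ m) : ℤ) - Module.finrank ℂ (X ⧸ (l ⊔ m))
            - Module.finrank ℂ ↥(m ⊓ W₁) + Module.finrank ℂ (X ⧸ (W₂ ⊔ m)))) := by
  have hE1 : l ⊓ W₂ ⊔ W₁ = l := by
    rw [inf_eq_left.mpr hl2, sup_eq_left.mpr hl1]
  rw [hE1]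
  set A : Submodule ℂ (X ⧸ W₁) := l.map W₁.mkQ with hA
  set B : Submodule ℂ (X ⧸ W₁) := (m ⊓ W₂ ⊔ W₁).map W₁.mkQ with hB
  set C : Submodule ℂ (X ⧸ W₁) := W₂.map W₁.mkQ with hC
  set D : Submodule ℂ (X ⧸ W₁) := A ⊔ B with hDdef
  have hmapW₁ : W₁.map W₁.mkQ = ⊥ := W₁.mkQ_map_self
  -- lattice identities
  have hlmW : l ⊓ m ≤ W₂ := inf_le_left.trans hl2
  have hlat : l ⊓ (m ⊓ W₂ ⊔ W₁) = l ⊓ m ⊔ W₁ := by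
    rw [← inf_sup_assoc_of_le _ hl1]
    congr 1
    rw [← inf_assoc, inf_eq_left.mpr hlmW]
  have hcomapAB : comap W₁.mkQ A ⊓ comap W₁.mkQ B = l ⊓ m ⊔ W₁ := by
    rw [hA, hB, Submodule.comap_map_mkQ, Submodule.comap_map_mkQ,
      sup_eq_right.mpr hl1, sup_eq_right.mpr le_sup_right, hlat]
  have hE2 : A ⊓ B = (l ⊓ m).map W₁.mkQ := by
    have hle : A ⊓ B ≤ LinearMap.range W₁.mkQ := by
      rw [LinearMap.range_eq_top.mpr W₁.mkQ_surjective]; exact le_top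
    rw [← Submodule.map_comap_eq_self hle, Submodule.comap_inf, hcomapAB,
      Submodule.map_sup, hmapW₁, sup_bot_eq]
  have hD : D = (l ⊔ m ⊓ W₂).map W₁.mkQ := by
    rw [hDdef, hA, hB, ← Submodule.map_sup, ← sup_assoc,
      sup_eq_left.mpr (hl1.trans le_sup_left)]
  have hlm : l ⊔ m ⊓ W₂ = (l ⊔ m) ⊓ W₂ := (sup_inf_assoc_of_le m hl2).symm
  -- the map for the intersection part
  set f : ↥(l ⊓ m) →ₗ[ℂ] X ⧸ W₁ := W₁.mkQ ∘ₗ (l ⊓ m).subtype with hf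
  have hkerf : LinearMap.ker f = (m ⊓ W₁).comap (l ⊓ m).subtype := by
    rw [hf, LinearMap.ker_comp, Submodule.ker_mkQ]
    ext x
    simp only [Submodule.mem_comap, Submodule.mem_inf]
    exact ⟨fun h => ⟨(Submodule.mem_inf.mp x.2).2, h⟩, fun h => h.2⟩
  have hrangef : LinearMap.range f = A ⊓ B := by
    rw [hf, LinearMap.range_comp, Submodule.range_subtype, ← hE2]
  have hmW₁le : m ⊓ W₁ ≤ l ⊓ m := le_inf (inf_le_right.trans hl1) inf_le_left
  let eInt : ↥(A ⊓ B) ≃ₗ[ℂ] (↥(l ⊓ m) ⧸ LinearMap.ker f) :=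
    (LinearEquiv.ofEq _ _ hrangef.symm).trans f.quotKerEquivRange.symm
  let eKer : ↥(LinearMap.ker f) ≃ₗ[ℂ] ↥(m ⊓ W₁) :=
    (LinearEquiv.ofEq _ _ hkerf).trans (Submodule.comapSubtypeEquivOfLe hmW₁le)
  -- the maps for the quotient part
  set g : ↥W₂ →ₗ[ℂ] ((X ⧸ W₁) ⧸ D) := (D.mkQ ∘ₗ W₁.mkQ) ∘ₗ W₂.subtype with hg
  set h' : ↥W₂ →ₗ[ℂ] X ⧸ (l ⊔ m) := (l ⊔ m).mkQ ∘ₗ W₂.subtype with hh'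
  have hkerg : LinearMap.ker g = LinearMap.ker h' := by
    rw [hg, hh', LinearMap.ker_comp, LinearMap.ker_comp, LinearMap.ker_comp,
      Submodule.ker_mkQ, Submodule.ker_mkQ, hD, Submodule.comap_map_mkQ,
      sup_eq_right.mpr (hl1.trans le_sup_left), hlm]
    ext x
    simp only [Submodule.mem_comap, Submodule.mem_inf]
    exact ⟨fun h => h.1, fun h => ⟨h, x.2⟩⟩
  have hrangeg : LinearMap.range g = C.map D.mkQ := by
    rw [hg, LinearMap.range_comp, Submodule.range_subtype, Submodule.map_comp, hC]
  have hmbot : m.map (l ⊔ m).mkQ = ⊥ := by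
    rw [eq_bot_iff, Submodule.map_le_iff_le_comap, Submodule.comap_bot, Submodule.ker_mkQ]
    exact le_sup_right
  have hrangeh : LinearMap.range h' = (W₂ ⊔ m).map (l ⊔ m).mkQ := by
    rw [hh', LinearMap.range_comp, Submodule.range_subtype, Submodule.map_sup, hmbot,
      sup_bot_eq]
  let eQ : ↥(C.map D.mkQ) ≃ₗ[ℂ] ↥((W₂ ⊔ m).map (l ⊔ m).mkQ) :=
    (LinearEquiv.ofEq _ _ hrangeg.symm).trans <|
      g.quotKerEquivRange.symm.trans <|
        (Submodule.quotEquivOfEq _ _ hkerg).trans <|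
          h'.quotKerEquivRange.trans (LinearEquiv.ofEq _ _ hrangeh)
  let e3 : ((X ⧸ (l ⊔ m)) ⧸ (W₂ ⊔ m).map (l ⊔ m).mkQ) ≃ₗ[ℂ] X ⧸ (W₂ ⊔ m) :=
    Submodule.quotientQuotientEquivQuotient _ _ (sup_le_sup_right hl2 m)
  -- finite-dimensionality equivalences
  have hIntIff : FiniteDimensional ℂ ↥(l ⊓ m) ↔
      (FiniteDimensional ℂ ↥(A ⊓ B) ∧ FiniteDimensional ℂ ↥(m ⊓ W₁)) := by
    rw [fd_iff_quot_sub (LinearMap.ker f)]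
    constructor
    · rintro ⟨h1, h2⟩
      exact ⟨(haveI := h1; eInt.symm.finiteDimensional),
        (haveI := h2; eKer.finiteDimensional)⟩
    · rintro ⟨h1, h2⟩
      exact ⟨(haveI := h1; eInt.finiteDimensional),
        (haveI := h2; eKer.symm.finiteDimensional)⟩
  have hQuotIff : FiniteDimensional ℂ (X ⧸ (l ⊔ m)) ↔
      (FiniteDimensional ℂ ↥(C.map D.mkQ) ∧ FiniteDimensional ℂ (X ⧸ (W₂ ⊔ m))) := by
    rw [fd_iff_quot_sub ((W₂ ⊔ m).map (l ⊔ m).mkQ)]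
    constructor
    · rintro ⟨h1, h2⟩
      exact ⟨(haveI := h2; eQ.symm.finiteDimensional),
        (haveI := h1; e3.finiteDimensional)⟩
    · rintro ⟨h1, h2⟩
      exact ⟨(haveI := h2; e3.symm.finiteDimensional),
        (haveI := h1; eQ.finiteDimensional)⟩
  -- finrank identities
  have hfr1 : FiniteDimensional ℂ ↥(l ⊓ m) →
      finrank ℂ ↥(A ⊓ B) + finrank ℂ ↥(m ⊓ W₁) = finrank ℂ ↥(l ⊓ m) := by
    intro hFD
    haveI := hFD
    have h := Submodule.finrank_quotient_add_finrank (LinearMap.ker f)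
    rw [← eInt.finrank_eq, eKer.finrank_eq] at h
    exact h
  have hfr2 : FiniteDimensional ℂ (X ⧸ (l ⊔ m)) →
      finrank ℂ ↥(C.map D.mkQ) + finrank ℂ (X ⧸ (W₂ ⊔ m))
        = finrank ℂ (X ⧸ (l ⊔ m)) := by
    intro hFD
    haveI := hFD
    have h := Submodule.finrank_quotient_add_finrank ((W₂ ⊔ m).map (l ⊔ m).mkQ)
    rw [e3.finrank_eq, ← eQ.finrank_eq] at h
    omega
  constructor
  · constructor
    · rintro ⟨h1, h2⟩
      obtain ⟨hAB, hmW⟩ := hIntIff.mp h1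
      obtain ⟨hCD, hQ⟩ := hQuotIff.mp h2
      exact ⟨⟨hAB, hCD⟩, hmW, hQ⟩
    · rintro ⟨⟨hAB, hCD⟩, hmW, hQ⟩
      exact ⟨hIntIff.mpr ⟨hAB, hmW⟩, hQuotIff.mpr ⟨hCD, hQ⟩⟩
  · rintro ⟨h1, h2⟩
    have e1 := hfr1 h1
    have e2 := hfr2 h2
    refine ⟨e1, e2, ?_⟩
    omega
end

section
/- Let X be a Banach space and M, N linear subspaces with dim M = dim N = n. If δ(N,M) < 1, then δ(M,N) ≤ 2^{n-1} n δ(N,M) / (1 − δ(N,M))^n, where δ(M,N) := sup_{u ∈ M, ‖u‖=1} dist(u, N) (and δ := 0 if M = {0}). -/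
/-- The (one-sided) gap `δ(M,N) := sup {dist(u,N) : u ∈ M, ‖u‖ = 1}` between subspaces
of a normed space, with the convention `δ(M,N) = 0` if `M = {0}` (empty sup). -/
noncomputable def gapDelta {X : Type*} [NormedAddCommGroup X] [NormedSpace ℂ X]
    (M N : Submodule ℂ X) : ℝ :=
  sSup ((fun u => Metric.infDist u (N : Set X)) '' {u : X | u ∈ M ∧ ‖u‖ = 1})

/-!
Induction on `n`. Write `δ = δ(N,M)`. A unit vector of `N` and a best approximation of it in `M`
give, after normalising, a unit vector `u ∈ M` and `v ∈ N` with `‖u - v‖ ≤ δ / (1 - δ)`. Let `f` be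
a norming functional of `u` and pass to the quotient by `ℂ u`: `M` becomes an `n`-dimensional
`M'`, and the hyperplane `N ∩ ker f` of `N` an `n`-dimensional `N'`. Since `‖w‖ ≤ 2 ‖[w]‖` on
`ker f`, we get `δ(N',M') ≤ 2δ`. Conversely, `y ↦ y + f y • (v - u)` maps `ℂ u + N ∩ ker f` into `N`
moving `y` by at most `‖y‖ δ / (1 - δ)`, whence `δ(M,N) ≤ (δ(M',N') + δ) / (1 - δ)`. The induction
hypothesis at `2δ` yields the bound whenever it is below `1`; otherwise it holds since
`δ(M,N) ≤ 1`.
-/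

open Metric Module Submodule

namespace Submodule

theorem norm_mkQ {R E : Type*} [Ring R] [SeminormedAddCommGroup E] [Module R E]
    (S : Submodule R E) (x : E) : ‖S.mkQ x‖ = infDist x S :=
  QuotientAddGroup.norm_mk (S := S.toAddSubgroup) x

theorem infDist_mkQ_map {R E : Type*} [Ring R] [SeminormedAddCommGroup E] [Module R E]
    (S P : Submodule R E) (x : E) :
    infDist (S.mkQ x) (P.map S.mkQ : Set (E ⧸ S)) = infDist x (S ⊔ P : Submodule R E) := by
  rw [← norm_mkQ, ← norm_mkQ, ← (quotientQuotientLIEQuotientSup S P).norm_map]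
  rfl

theorem exists_infDist_eq_dist {𝕜 E : Type*} [NontriviallyNormedField 𝕜] [LocallyCompactSpace 𝕜]
    [NormedAddCommGroup E] [NormedSpace 𝕜 E] (P : Submodule 𝕜 E) [FiniteDimensional 𝕜 P]
    (x : E) : ∃ y ∈ P, infDist x P = dist x y := by
  have := FiniteDimensional.proper 𝕜 P
  have hcont : Continuous fun p : P => dist x p := continuous_const.dist continuous_subtype_val
  obtain ⟨p, hp⟩ := hcont.exists_forall_le' 0 <| by
    refine (tendsto_norm_cocompact_atTop.eventually_ge_atTop (2 * ‖x‖)).mono fun p hp => ?_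
    rw [coe_norm] at hp
    rw [ZeroMemClass.coe_zero, dist_zero_right, dist_comm, dist_eq_norm]
    linarith [norm_sub_norm_le (p : E) x]
  exact ⟨p, p.2, le_antisymm (infDist_le_dist_of_mem p.2)
    ((le_infDist ⟨0, P.zero_mem⟩).2 fun y hy => hp ⟨y, hy⟩)⟩

variable {K V : Type*} [DivisionRing K] [AddCommGroup V] [Module K V]

theorem finrank_comap_subtype (P Q : Submodule K V) :
    finrank K (Q.comap P.subtype) = finrank K ↥(P ⊓ Q) := by
  rw [← LinearEquiv.finrank_eq (comapSubtypeEquivOfLe (inf_le_left : P ⊓ Q ≤ P)),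
    comap_inf, comap_subtype_self, top_inf_eq]

theorem finrank_map_mkQ_add_finrank_inf (S P : Submodule K V) [FiniteDimensional K P] :
    finrank K (P.map S.mkQ) + finrank K ↥(P ⊓ S) = finrank K P := by
  rw [← finrank_comap_subtype, ← (S.mkQ.domRestrict P).finrank_range_add_finrank_ker,
    LinearMap.range_domRestrict, LinearMap.ker_domRestrict, ker_mkQ]

theorem finrank_map_mkQ_span_singleton_add_one {P : Submodule K V} [FiniteDimensional K P]
    {u : V} (hu : u ∈ P) (hu0 : u ≠ 0) : finrank K (P.map (K ∙ u).mkQ) + 1 = finrank K P := by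
  rw [← finrank_map_mkQ_add_finrank_inf (K ∙ u) P,
    inf_eq_right.2 ((span_singleton_le_iff_mem u P).2 hu), finrank_span_singleton hu0]

theorem finrank_map_mkQ_span_singleton_of_notMem {P : Submodule K V} [FiniteDimensional K P]
    {u : V} (hu : u ∉ P) : finrank K (P.map (K ∙ u).mkQ) = finrank K P := by
  rw [← finrank_map_mkQ_add_finrank_inf (K ∙ u) P, (disjoint_span_singleton_of_notMem hu).eq_bot,
    finrank_bot, add_zero]

theorem finrank_inf_ker_add_one {P : Submodule K V} [FiniteDimensional K P] {f : Dual K V}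
    {x : V} (hx : x ∈ P) (hfx : f x ≠ 0) :
    finrank K ↥(P ⊓ LinearMap.ker f) + 1 = finrank K P := by
  have hf : f.domRestrict P ≠ 0 := fun h => hfx (LinearMap.congr_fun h ⟨x, hx⟩)
  rw [← finrank_comap_subtype, ← Dual.finrank_ker_add_one_of_ne_zero hf,
    LinearMap.ker_domRestrict]

end Submodule

section Gap

variable {X : Type*} [NormedAddCommGroup X] [NormedSpace ℂ X] {M N : Submodule ℂ X}

theorem infDist_submodule_le_norm (N : Submodule ℂ X) (x : X) : infDist x N ≤ ‖x‖ := by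
  simpa using infDist_le_dist_of_mem (x := x) N.zero_mem

theorem gapDelta_bddAbove (M N : Submodule ℂ X) :
    BddAbove ((fun u => infDist u (N : Set X)) '' {u : X | u ∈ M ∧ ‖u‖ = 1}) :=
  ⟨1, by rintro _ ⟨u, ⟨-, hu⟩, rfl⟩; exact (infDist_submodule_le_norm N u).trans_eq hu⟩

theorem gapDelta_nonneg (M N : Submodule ℂ X) : 0 ≤ gapDelta M N :=
  Real.sSup_nonneg (by rintro _ ⟨u, -, rfl⟩; exact infDist_nonneg)

theorem gapDelta_le {c : ℝ} (hc : 0 ≤ c) (h : ∀ u ∈ M, ‖u‖ = 1 → infDist u N ≤ c) :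
    gapDelta M N ≤ c :=
  Real.sSup_le (by rintro _ ⟨u, ⟨huM, hu⟩, rfl⟩; exact h u huM hu) hc

theorem gapDelta_le_one (M N : Submodule ℂ X) : gapDelta M N ≤ 1 :=
  gapDelta_le zero_le_one fun u _ hu => (infDist_submodule_le_norm N u).trans_eq hu

theorem gapDelta_bot (N : Submodule ℂ X) : gapDelta ⊥ N = 0 :=
  (gapDelta_le le_rfl fun u hu h1 => by simp [(mem_bot ℂ).1 hu] at h1).antisymm
    (gapDelta_nonneg _ _)

theorem infDist_le_gapDelta {u : X} (hu : u ∈ M) (h1 : ‖u‖ = 1) : infDist u N ≤ gapDelta M N :=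
  le_csSup (gapDelta_bddAbove M N) ⟨u, ⟨hu, h1⟩, rfl⟩

theorem infDist_le_gapDelta_mul_norm {x : X} (hx : x ∈ M) :
    infDist x N ≤ gapDelta M N * ‖x‖ := by
  obtain rfl | hx0 := eq_or_ne x 0
  · simp [infDist_zero_of_mem N.zero_mem]
  have hscale : infDist x N = ‖x‖ * infDist ((‖x‖⁻¹ : ℂ) • x) N := by
    rw [← norm_mkQ, ← norm_mkQ, map_smul, norm_smul, norm_inv, Complex.norm_real, norm_norm,
      mul_inv_cancel_left₀ (norm_ne_zero_iff.2 hx0)]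
  rw [hscale, mul_comm (gapDelta M N)]
  exact mul_le_mul_of_nonneg_left
    (infDist_le_gapDelta (M.smul_mem _ hx) (norm_smul_inv_norm hx0)) (norm_nonneg x)

end Gap

theorem two_mul_sq_add_le_two_pow_mul (n : ℕ) : 2 * n ^ 2 + n + 1 ≤ 2 ^ n * (n + 1) := by
  induction n with
  | zero => simp
  | succ n ih =>
    have := Nat.lt_two_pow_self (n := n)
    rw [pow_succ 2 n]
    nlinarith

noncomputable def gapBound (n : ℕ) (δ : ℝ) : ℝ := 2 ^ (n - 1) * n * δ / (1 - δ) ^ n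

theorem gapBound_mono (n : ℕ) {a b : ℝ} (ha : 0 ≤ a) (hab : a ≤ b) (hb : b < 1) :
    gapBound n a ≤ gapBound n b := by
  have hb0 : 0 ≤ b := ha.trans hab
  unfold gapBound
  gcongr

theorem gapBound_succ (n : ℕ) (δ : ℝ) :
    gapBound (n + 1) δ = 2 ^ n * (n + 1) * δ / (1 - δ) ^ (n + 1) := by
  simp [gapBound]

theorem two_pow_mul_lt_of_gapBound_succ_lt_one {n : ℕ} {δ : ℝ} (h1 : δ < 1)
    (h : gapBound (n + 1) δ < 1) : 2 ^ n * (n + 1) * δ < (1 - δ) ^ (n + 1) := by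
  rwa [gapBound_succ, div_lt_one (pow_pos (by linarith) _)] at h

theorem lt_half_of_gapBound_succ_lt_one {n : ℕ} {δ : ℝ} (h0 : 0 ≤ δ) (h1 : δ < 1)
    (h : gapBound (n + 1) δ < 1) : δ < 1 / 2 := by
  have hlt := two_pow_mul_lt_of_gapBound_succ_lt_one h1 h
  have : (1 - δ) ^ (n + 1) ≤ 1 - δ := pow_le_of_le_one (by linarith) (by linarith) n.succ_ne_zero
  have : 1 ≤ (2 : ℝ) ^ n * (n + 1) :=
    one_le_mul_of_one_le_of_one_le (one_le_pow₀ one_le_two) (by simp)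
  nlinarith

theorem gapBound_two_mul (n : ℕ) (δ : ℝ) :
    gapBound n (2 * δ) = 2 ^ n * n * δ / (1 - 2 * δ) ^ n := by
  rcases n with _ | n
  · simp [gapBound]
  · rw [gapBound, Nat.add_sub_cancel, pow_succ]
    ring

theorem half_le_one_sub_two_mul_pow {n : ℕ} {δ : ℝ} (h1 : δ ≤ 1) (h : 4 * n * δ ≤ 1) :
    1 / 2 ≤ (1 - 2 * δ) ^ n := by
  have := one_add_mul_le_pow (show (-2 : ℝ) ≤ -(2 * δ) by linarith) n
  rw [← sub_eq_add_neg] at this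
  linarith

theorem one_sub_pow_sub_one_sub_two_mul_pow_le {δ : ℝ} (h0 : 0 ≤ δ) (h : δ ≤ 1 / 2) (n : ℕ) :
    (1 - δ) ^ n - (1 - 2 * δ) ^ n ≤ n * δ := by
  have hmax : max |1 - δ| |1 - 2 * δ| ≤ 1 := by
    rw [abs_of_nonneg (by linarith), abs_of_nonneg (by linarith)]
    exact max_le (by linarith) (by linarith)
  calc (1 - δ) ^ n - (1 - 2 * δ) ^ n ≤ |(1 - δ) ^ n - (1 - 2 * δ) ^ n| := le_abs_self _
    _ ≤ |1 - δ - (1 - 2 * δ)| * n * max |1 - δ| |1 - 2 * δ| ^ (n - 1) := abs_pow_sub_pow_le ..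
    _ ≤ δ * n * 1 := by
      rw [show 1 - δ - (1 - 2 * δ) = δ by ring, abs_of_nonneg h0]
      gcongr
      exact pow_le_one₀ ((abs_nonneg _).trans (le_max_left _ _)) hmax
    _ = n * δ := by ring

theorem gapBound_add_div_le_gapBound_succ {n : ℕ} {δ : ℝ} (h0 : 0 ≤ δ) (h1 : δ < 1)
    (h : gapBound (n + 1) δ < 1) : (gapBound n (2 * δ) + δ) / (1 - δ) ≤ gapBound (n + 1) δ := by
  have hhalf := lt_half_of_gapBound_succ_lt_one h0 h1 h
  have hcδ : 2 ^ n * (n + 1) * δ < 1 := (two_pow_mul_lt_of_gapBound_succ_lt_one h1 h).trans_le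
    (pow_le_one₀ (by linarith) (by linarith))
  have hnat : 2 * (n : ℝ) ^ 2 + n + 1 ≤ 2 ^ n * (n + 1) := by
    exact_mod_cast two_mul_sq_add_le_two_pow_mul n
  have hn4 : 4 * (n : ℝ) ≤ 2 * n ^ 2 + n + 1 := by
    rcases n with _ | n
    · simp
    · push_cast; nlinarith
  have hb := half_le_one_sub_two_mul_pow (n := n) h1.le
    (by nlinarith [mul_le_mul_of_nonneg_right (hn4.trans hnat) h0])
  have hab := one_sub_pow_sub_one_sub_two_mul_pow_le h0 hhalf.le n
  have ha : 0 < (1 - δ) ^ n := pow_pos (by linarith) n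
  have ha1 : (1 - δ) ^ n ≤ 1 := pow_le_one₀ (by linarith) (by linarith)
  have hkey : 2 ^ n * n * ((1 - δ) ^ n - (1 - 2 * δ) ^ n) ≤
      (1 - 2 * δ) ^ n * (2 ^ n - (1 - δ) ^ n) := by
    have hc : (1 : ℝ) ≤ 2 ^ n := one_le_pow₀ one_le_two
    calc 2 ^ n * n * ((1 - δ) ^ n - (1 - 2 * δ) ^ n) ≤ 2 ^ n * n * (n * δ) := by gcongr
      _ ≤ 1 / 2 * (2 ^ n - 1) := by
        nlinarith [mul_le_mul_of_nonneg_left hcδ.le (sq_nonneg (n : ℝ))]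
      _ ≤ (1 - 2 * δ) ^ n * (2 ^ n - (1 - δ) ^ n) := by gcongr
  rw [gapBound_succ, pow_succ, ← div_div]
  gcongr
  rw [gapBound_two_mul, div_add' _ _ _ (by positivity), div_le_div_iff₀ (by positivity) ha]
  nlinarith [mul_le_mul_of_nonneg_left hkey h0]

section Reduction

variable {X : Type*} [NormedAddCommGroup X] [NormedSpace ℂ X] {M N : Submodule ℂ X}

instance isClosed_span_singleton (u : X) : IsClosed ((ℂ ∙ u : Submodule ℂ X) : Set X) :=
  (ℂ ∙ u).closed_of_finiteDimensional

theorem exists_unit_mem_near_of_gapDelta_lt_one [FiniteDimensional ℂ M] (hN : N ≠ ⊥)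
    (h : gapDelta N M < 1) :
    ∃ u ∈ M, ‖u‖ = 1 ∧ ∃ v ∈ N, ‖u - v‖ ≤ gapDelta N M / (1 - gapDelta N M) := by
  obtain ⟨y, hyN, hy0⟩ := exists_mem_ne_zero_of_ne_bot hN
  have hvN : (‖y‖⁻¹ : ℂ) • y ∈ N := N.smul_mem _ hyN
  obtain ⟨w, hwM, hw⟩ := M.exists_infDist_eq_dist ((‖y‖⁻¹ : ℂ) • y)
  have hvw : ‖(‖y‖⁻¹ : ℂ) • y - w‖ ≤ gapDelta N M := by
    rw [← dist_eq_norm, ← hw]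
    exact infDist_le_gapDelta hvN (norm_smul_inv_norm hy0)
  have hw1 : 1 - gapDelta N M ≤ ‖w‖ := by
    have hv1 : ‖(‖y‖⁻¹ : ℂ) • y‖ = 1 := norm_smul_inv_norm hy0
    linarith [norm_sub_norm_le ((‖y‖⁻¹ : ℂ) • y) w]
  have hw0 : w ≠ 0 := norm_pos_iff.1 (by linarith)
  refine ⟨(‖w‖⁻¹ : ℂ) • w, M.smul_mem _ hwM, norm_smul_inv_norm hw0, (‖w‖⁻¹ : ℂ) • (‖y‖⁻¹ : ℂ) • y,
    N.smul_mem _ hvN, ?_⟩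
  rw [← smul_sub, norm_smul, norm_inv, Complex.norm_real, norm_norm, inv_mul_eq_div, norm_sub_rev]
  exact div_le_div₀ (gapDelta_nonneg N M) hvw (by linarith) hw1

theorem exists_dual_apply_eq_one {u : X} (hu : ‖u‖ = 1) :
    ∃ f : Dual ℂ X, (∀ z, ‖f z‖ ≤ ‖z‖) ∧ f u = 1 := by
  obtain ⟨g, hg1, hgu⟩ := exists_dual_vector ℂ u (by simp [hu])
  exact ⟨g, fun z => (g.le_opNorm z).trans_eq (by rw [hg1, one_mul]), by simp [hgu, hu]⟩

variable {u v : X} {f : Dual ℂ X}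

theorem apply_ne_zero_of_norm_sub_lt_one (hf : ∀ z, ‖f z‖ ≤ ‖z‖) (hfu : f u = 1)
    (huv : ‖u - v‖ < 1) : f v ≠ 0 := by
  intro hfv
  have := hf (u - v)
  rw [map_sub, hfu, hfv, sub_zero, norm_one] at this
  linarith

theorem norm_le_two_mul_infDist_span_singleton (hu : ‖u‖ = 1) (hf : ∀ z, ‖f z‖ ≤ ‖z‖)
    (hfu : f u = 1) {w : X} (hw : f w = 0) : ‖w‖ ≤ 2 * infDist w (ℂ ∙ u) := by
  rw [← div_le_iff₀' two_pos, le_infDist ⟨0, zero_mem _⟩]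
  rintro _ hy
  obtain ⟨t, rfl⟩ := mem_span_singleton.1 hy
  have ht : ‖t‖ ≤ ‖w - t • u‖ := by simpa [hw, hfu] using hf (w - t • u)
  have := norm_le_norm_add_norm_sub' w (t • u)
  rw [norm_smul, hu, mul_one] at this
  rw [dist_eq_norm]
  linarith

theorem infDist_le_infDist_sup_inf_ker {η : ℝ} (hf : ∀ z, ‖f z‖ ≤ ‖z‖) (hfu : f u = 1) (hv : v ∈ N)
    (huv : ‖u - v‖ ≤ η) (x : X) :
    infDist x N ≤
      (1 + η) * infDist x ((ℂ ∙ u) ⊔ N ⊓ LinearMap.ker f : Submodule ℂ X) + η * ‖x‖ := by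
  have hη : 0 ≤ η := (norm_nonneg _).trans huv
  have hmem : ∀ y ∈ (ℂ ∙ u) ⊔ N ⊓ LinearMap.ker f, y + f y • (v - u) ∈ N := by
    intro y hy
    obtain ⟨_, hs, p, ⟨hpN, hpf⟩, rfl⟩ := mem_sup.1 hy
    obtain ⟨t, rfl⟩ := mem_span_singleton.1 hs
    replace hpf : f p = 0 := hpf
    convert N.add_mem (N.smul_mem t hv) hpN using 1
    simp only [map_add, map_smul, hfu, hpf, smul_eq_mul, mul_one, add_zero]
    module
  rw [← sub_le_iff_le_add, ← div_le_iff₀' (by linarith), le_infDist ⟨0, zero_mem _⟩]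
  intro y hy
  rw [div_le_iff₀' (by linarith), sub_le_iff_le_add]
  calc infDist x N ≤ dist x (y + f y • (v - u)) := infDist_le_dist_of_mem (hmem y hy)
    _ ≤ dist x y + ‖y‖ * η := by
      rw [dist_eq_norm, dist_eq_norm, ← sub_sub]
      refine (norm_sub_le _ _).trans (add_le_add_right ?_ _)
      rw [norm_smul, norm_sub_rev]
      exact mul_le_mul (hf y) huv (norm_nonneg _) (norm_nonneg _)
    _ ≤ dist x y + (‖x‖ + dist x y) * η := by
      gcongr
      rw [dist_eq_norm, add_comm]
      exact (norm_le_norm_add_norm_sub' y x).trans (by rw [norm_sub_rev]; linarith)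
    _ = (1 + η) * dist x y + η * ‖x‖ := by ring

theorem gapDelta_map_mkQ_le (hu : ‖u‖ = 1) (hf : ∀ z, ‖f z‖ ≤ ‖z‖) (hfu : f u = 1) :
    gapDelta ((N ⊓ LinearMap.ker f).map (ℂ ∙ u).mkQ) (M.map (ℂ ∙ u).mkQ) ≤ 2 * gapDelta N M := by
  refine gapDelta_le (by linarith [gapDelta_nonneg N M]) fun _ hz h1 => ?_
  obtain ⟨w, ⟨hwN, hwf⟩, rfl⟩ := mem_map.1 hz
  have hw2 : ‖w‖ ≤ 2 := by
    have := norm_le_two_mul_infDist_span_singleton hu hf hfu hwf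
    rwa [← norm_mkQ, h1, mul_one] at this
  calc infDist ((ℂ ∙ u).mkQ w) (M.map (ℂ ∙ u).mkQ)
        = infDist w ((ℂ ∙ u) ⊔ M : Submodule ℂ X) := infDist_mkQ_map ..
    _ ≤ infDist w M :=
        infDist_le_infDist_of_subset (SetLike.coe_subset_coe.2 le_sup_right) ⟨0, M.zero_mem⟩
    _ ≤ gapDelta N M * ‖w‖ := infDist_le_gapDelta_mul_norm hwN
    _ ≤ 2 * gapDelta N M := by nlinarith [gapDelta_nonneg N M]

theorem gapDelta_le_gapDelta_map_mkQ {η : ℝ} (hf : ∀ z, ‖f z‖ ≤ ‖z‖) (hfu : f u = 1) (hv : v ∈ N)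
    (huv : ‖u - v‖ ≤ η) :
    gapDelta M N ≤
      (1 + η) * gapDelta (M.map (ℂ ∙ u).mkQ) ((N ⊓ LinearMap.ker f).map (ℂ ∙ u).mkQ) + η := by
  have hη : 0 ≤ η := (norm_nonneg _).trans huv
  refine gapDelta_le (add_nonneg (mul_nonneg (by linarith) (gapDelta_nonneg _ _)) hη)
    fun x hx h1 => ?_
  have hq : infDist ((ℂ ∙ u).mkQ x) ((N ⊓ LinearMap.ker f).map (ℂ ∙ u).mkQ) ≤
      gapDelta (M.map (ℂ ∙ u).mkQ) ((N ⊓ LinearMap.ker f).map (ℂ ∙ u).mkQ) := by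
    refine (infDist_le_gapDelta_mul_norm (mem_map_of_mem hx)).trans ?_
    have hx1 : ‖(ℂ ∙ u).mkQ x‖ ≤ 1 := h1 ▸ Submodule.Quotient.norm_mk_le _ x
    exact mul_le_of_le_one_right (gapDelta_nonneg _ _) hx1
  calc infDist x N
        ≤ (1 + η) * infDist x ((ℂ ∙ u) ⊔ N ⊓ LinearMap.ker f : Submodule ℂ X) + η * ‖x‖ :=
        infDist_le_infDist_sup_inf_ker hf hfu hv huv x
    _ ≤ _ := by
      rw [← infDist_mkQ_map, h1, mul_one]
      gcongr

end Reduction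

theorem gapDelta_le_gapBound (n : ℕ) : ∀ {X : Type*} [NormedAddCommGroup X] [NormedSpace ℂ X]
    (M N : Submodule ℂ X) [FiniteDimensional ℂ M], finrank ℂ M = n → finrank ℂ N = n →
    gapDelta N M < 1 → gapDelta M N ≤ gapBound n (gapDelta N M) := by
  induction n with
  | zero =>
    intro X _ _ M N _ hM _ _
    rw [finrank_eq_zero.1 hM, gapDelta_bot]
    simp [gapBound]
  | succ n ih =>
    intro X _ _ M N _ hM hN h
    set δ := gapDelta N M
    have hδ0 : 0 ≤ δ := gapDelta_nonneg N M
    obtain hlarge | hsmall := le_or_gt 1 (gapBound (n + 1) δ)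
    · exact (gapDelta_le_one M N).trans hlarge
    have hhalf := lt_half_of_gapBound_succ_lt_one hδ0 h hsmall
    have : FiniteDimensional ℂ N := Module.finite_of_finrank_pos (hN ▸ n.succ_pos)
    obtain ⟨u, huM, hu1, v, hvN, huv⟩ :=
      exists_unit_mem_near_of_gapDelta_lt_one (one_le_finrank_iff.1 (hN ▸ n.succ_pos)) h
    obtain ⟨f, hf, hfu⟩ := exists_dual_apply_eq_one hu1
    have hfv : f v ≠ 0 := apply_ne_zero_of_norm_sub_lt_one hf hfu
      (huv.trans_lt ((div_lt_one (by linarith)).2 (by linarith)))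
    have hMq : finrank ℂ (M.map (ℂ ∙ u).mkQ) = n := by
      have := finrank_map_mkQ_span_singleton_add_one huM (by rintro rfl; simp at hu1)
      omega
    have hNq : finrank ℂ ((N ⊓ LinearMap.ker f).map (ℂ ∙ u).mkQ) = n := by
      rw [finrank_map_mkQ_span_singleton_of_notMem fun hu => by simp [hfu] at hu]
      have := finrank_inf_ker_add_one hvN hfv
      omega
    have hgap := gapDelta_map_mkQ_le (M := M) (N := N) hu1 hf hfu
    have hβ := (ih _ _ hMq hNq (by linarith)).trans (gapBound_mono n (gapDelta_nonneg _ _) hgap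
      (by linarith))
    calc gapDelta M N ≤ (1 + δ / (1 - δ)) * gapDelta (M.map (ℂ ∙ u).mkQ)
          ((N ⊓ LinearMap.ker f).map (ℂ ∙ u).mkQ) + δ / (1 - δ) :=
        gapDelta_le_gapDelta_map_mkQ hf hfu hvN huv
      _ ≤ (1 + δ / (1 - δ)) * gapBound n (2 * δ) + δ / (1 - δ) := by
        gcongr
      _ = (gapBound n (2 * δ) + δ) / (1 - δ) := by
        field_simp [(sub_pos.2 h).ne']
        ring
      _ ≤ gapBound (n + 1) δ := gapBound_add_div_le_gapBound_succ hδ0 h hsmall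

theorem gapDelta_le_of_eq_finrank_general {X : Type*}
    [NormedAddCommGroup X] [NormedSpace ℂ X]
    (M N : Submodule ℂ X) (n : ℕ)
    [FiniteDimensional ℂ ↥M]
    (hM : Module.finrank ℂ ↥M = n) (hN : Module.finrank ℂ ↥N = n)
    (h : gapDelta N M < 1) :
    gapDelta M N ≤ 2 ^ (n - 1) * n * gapDelta N M / (1 - gapDelta N M) ^ n :=
  gapDelta_le_gapBound n M N hM hN h

/-- For subspaces `M`, `N` of a Banach space with
`dim M = dim N = n` and `δ(N,M) < 1`, one has
`δ(M,N) ≤ 2^{n-1} n δ(N,M) / (1 − δ(N,M))^n`. -/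
theorem gapDelta_le_of_eq_finrank {X : Type*}
    [NormedAddCommGroup X] [NormedSpace ℂ X] [CompleteSpace X]
    (M N : Submodule ℂ X) (n : ℕ)
    [FiniteDimensional ℂ ↥M] [FiniteDimensional ℂ ↥N]
    (hM : Module.finrank ℂ ↥M = n) (hN : Module.finrank ℂ ↥N = n)
    (h : gapDelta N M < 1) :
    gapDelta M N ≤ 2 ^ (n - 1) * n * gapDelta N M / (1 - gapDelta N M) ^ n :=
  gapDelta_le_of_eq_finrank_general M N n hM hN h
end

section
/- Let X be a complex Banach space, u₁,…,u_n unit vectors, and V_k := span{u₁,…,u_k} (V₀ := {0}). Suppose dist(u_k, V_{k-1}) ≥ δ for all k with δ > 0. Then δ ≤ 1, dim V_k = k, and for all scalars a₁,…,a_n: (1/n)(δ/(1+δ))^{n-1} Σ|a_k| ≤ ‖Σ a_k u_k‖ ≤ Σ|a_k|. -/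
/-- **Banach space variant of Bessel's inequality.** Let `u₁,…,u_n` be
unit vectors in a complex Banach space, `V_k := span{u₁,…,u_k}` (`V₀ = {0}`), and
suppose `dist(u_k, V_{k-1}) ≥ δ > 0` for all `k`. Then `δ ≤ 1`, `dim V_k = k`, and
`(1/n)(δ/(1+δ))^{n-1} ∑ |a_k| ≤ ‖∑ a_k u_k‖ ≤ ∑ |a_k|` for all scalars `a_k`. -/
theorem bessel_banach {X : Type*} [NormedAddCommGroup X] [NormedSpace ℂ X]
    [CompleteSpace X]
    (n : ℕ) (hn : 0 < n) (u : Fin n → X) (hu : ∀ k, ‖u k‖ = 1)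
    (δ : ℝ) (hδ : 0 < δ)
    (hdist : ∀ k : Fin n, δ ≤ Metric.infDist (u k)
        ((Submodule.span ℂ (u '' {i | (i : ℕ) < (k : ℕ)}) : Submodule ℂ X) : Set X)) :
    δ ≤ 1 ∧
    (∀ k : ℕ, k ≤ n →
      Module.finrank ℂ ↥(Submodule.span ℂ (u '' {i | (i : ℕ) < k})) = k) ∧
    ∀ a : Fin n → ℂ,
      (1 / (n : ℝ)) * (δ / (1 + δ)) ^ (n - 1) * ∑ k, ‖a k‖ ≤ ‖∑ k, a k • u k‖ ∧
      ‖∑ k, a k • u k‖ ≤ ∑ k, ‖a k‖ := by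
  set V : ℕ → Submodule ℂ X := fun m => Submodule.span ℂ (u '' {i | (i : ℕ) < m}) with hV
  set C : ℝ := (1 + δ) / δ with hC
  have hδ1 : (0:ℝ) < 1 + δ := by linarith
  have hC1 : (1:ℝ) ≤ C := by
    rw [hC, le_div_iff₀ hδ]; linarith
  have hC0 : (0:ℝ) < C := lt_of_lt_of_le one_pos hC1
  -- Part 1 : δ ≤ 1
  have hδle : δ ≤ 1 := by
    have := (hdist ⟨0, hn⟩).trans
      (Metric.infDist_le_dist_of_mem (Submodule.zero_mem _))
    simpa [dist_eq_norm, hu ⟨0, hn⟩] using this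
  -- Key lemma: scaled distance bound
  have hA : ∀ (k : Fin n) (a : ℂ) (v : X), v ∈ V k.val → ‖a‖ * δ ≤ ‖a • u k + v‖ := by
    intro k a v hv
    rcases eq_or_ne a 0 with rfl | ha
    · simpa using norm_nonneg v
    · have hmem : -(a⁻¹ • v) ∈ (V k.val : Set X) :=
        Submodule.neg_mem _ (Submodule.smul_mem _ _ hv)
      have h1 : δ ≤ dist (u k) (-(a⁻¹ • v)) :=
        (hdist k).trans (Metric.infDist_le_dist_of_mem hmem)
      have h2 : dist (u k) (-(a⁻¹ • v)) = ‖u k + a⁻¹ • v‖ := by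
        rw [dist_eq_norm, sub_neg_eq_add]
      have h3 : ‖a • u k + v‖ = ‖a‖ * ‖u k + a⁻¹ • v‖ := by
        rw [← norm_smul, smul_add, smul_inv_smul₀ ha]
      rw [h3]
      calc ‖a‖ * δ ≤ ‖a‖ * ‖u k + a⁻¹ • v‖ := by
            apply mul_le_mul_of_nonneg_left _ (norm_nonneg a)
            rw [← h2]; exact h1
        _ = _ := rfl
  -- the main inequality for all a
  have hmain : ∀ a : Fin n → ℂ,
      (1 / (n : ℝ)) * (δ / (1 + δ)) ^ (n - 1) * ∑ k, ‖a k‖ ≤ ‖∑ k, a k • u k‖ ∧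
      ‖∑ k, a k • u k‖ ≤ ∑ k, ‖a k‖ := by
    intro a
    constructor
    · -- lower bound
      set f : ℕ → X := fun i => if h : i < n then a ⟨i, h⟩ • u ⟨i, h⟩ else 0 with hf
      set s : ℕ → X := fun m => ∑ i ∈ Finset.range m, f i with hs
      have hfull : ∑ k, a k • u k = s n := by
        show ∑ k, a k • u k = ∑ i ∈ Finset.range n, f i
        rw [← Fin.sum_univ_eq_sum_range]
        apply Finset.sum_congr rfl
        intro i _
        simp [hf, i.isLt]
      have hsmem : ∀ m, s m ∈ V m := by
        intro m
        apply Submodule.sum_mem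
        intro i hi
        rw [Finset.mem_range] at hi
        simp only [hf]
        split_ifs with h
        · exact Submodule.smul_mem _ _ (Submodule.subset_span ⟨⟨i, h⟩, hi, rfl⟩)
        · exact Submodule.zero_mem _
      have hstep : ∀ k : Fin n, s (k.val + 1) = a k • u k + s k.val := by
        intro k
        rw [hs]
        simp only
        rw [Finset.sum_range_succ, add_comm]
        congr 1
        simp [hf, k.isLt]
      have h1 : ∀ k : Fin n, ‖a k‖ * δ ≤ ‖s (k.val + 1)‖ := by
        intro k
        rw [hstep k]
        exact hA k (a k) (s k.val) (hsmem k.val)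
      have h2 : ∀ k : Fin n, ‖s k.val‖ ≤ C * ‖s (k.val + 1)‖ := by
        intro k
        have hak : ‖a k‖ ≤ ‖s (k.val + 1)‖ / δ := by
          rw [le_div_iff₀ hδ]; exact h1 k
        have : ‖s k.val‖ ≤ ‖s (k.val + 1)‖ + ‖a k‖ := by
          have hsub : s k.val = s (k.val + 1) - a k • u k := by rw [hstep k]; abel
          rw [hsub]
          calc ‖s (k.val + 1) - a k • u k‖ ≤ ‖s (k.val + 1)‖ + ‖a k • u k‖ :=
                norm_sub_le _ _
            _ = ‖s (k.val + 1)‖ + ‖a k‖ := by rw [norm_smul, hu k, mul_one]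
        calc ‖s k.val‖ ≤ ‖s (k.val + 1)‖ + ‖s (k.val + 1)‖ / δ := by linarith
          _ = C * ‖s (k.val + 1)‖ := by rw [hC]; field_simp; ring
      have h3 : ∀ d m, m + d = n → ‖s m‖ ≤ C ^ d * ‖s n‖ := by
        intro d
        induction d with
        | zero => intro m hm; simp [← hm, Nat.add_zero]
        | succ d ih =>
          intro m hm
          have hmn : m < n := by omega
          have hrec := h2 ⟨m, hmn⟩
          have hih := ih (m + 1) (by omega)
          calc ‖s m‖ ≤ C * ‖s (m + 1)‖ := hrec
            _ ≤ C * (C ^ d * ‖s n‖) := by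
                exact mul_le_mul_of_nonneg_left hih hC0.le
            _ = C ^ (d + 1) * ‖s n‖ := by ring
      have hperk : ∀ k : Fin n, ‖a k‖ ≤ C ^ (n - 1) * ‖s n‖ := by
        intro k
        rcases Nat.eq_zero_or_pos k.val with hk0 | hkpos
        · have : ‖a k‖ = ‖s (k.val + 1)‖ := by
            rw [hstep k, hk0]
            simp [hs, norm_smul, hu k]
          rw [this, hk0]
          exact h3 (n - 1) 1 (by omega)
        · have hb1 : ‖a k‖ ≤ (1 / δ) * ‖s (k.val + 1)‖ := by
            rw [one_div, inv_mul_eq_div, le_div_iff₀ hδ]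
            exact h1 k
          have hb2 : ‖s (k.val + 1)‖ ≤ C ^ (n - k.val - 1) * ‖s n‖ :=
            h3 (n - k.val - 1) (k.val + 1) (by omega)
          have hdC : 1 / δ ≤ C := by
            rw [hC, div_le_div_iff₀ hδ hδ]; nlinarith
          have hCpow : C ^ (n - k.val - 1 + 1) ≤ C ^ (n - 1) :=
            pow_le_pow_right₀ hC1 (by omega)
          calc ‖a k‖ ≤ (1 / δ) * (C ^ (n - k.val - 1) * ‖s n‖) := by
                refine hb1.trans ?_
                apply mul_le_mul_of_nonneg_left hb2 (by positivity)
            _ ≤ C * (C ^ (n - k.val - 1) * ‖s n‖) := by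
                apply mul_le_mul_of_nonneg_right hdC (by positivity)
            _ = C ^ (n - k.val - 1 + 1) * ‖s n‖ := by ring
            _ ≤ C ^ (n - 1) * ‖s n‖ := by
                apply mul_le_mul_of_nonneg_right hCpow (norm_nonneg _)
      have hsum : ∑ k, ‖a k‖ ≤ n * (C ^ (n - 1) * ‖s n‖) := by
        calc ∑ k, ‖a k‖ ≤ ∑ _k : Fin n, C ^ (n - 1) * ‖s n‖ :=
              Finset.sum_le_sum fun k _ => hperk k
          _ = n * (C ^ (n - 1) * ‖s n‖) := by
              rw [Finset.sum_const, Finset.card_univ, Fintype.card_fin, nsmul_eq_mul]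
      rw [hfull]
      have hfac : (0:ℝ) ≤ (1 / (n : ℝ)) * (δ / (1 + δ)) ^ (n - 1) := by positivity
      have hn0 : (n:ℝ) ≠ 0 := Nat.cast_ne_zero.mpr hn.ne'
      calc (1 / (n : ℝ)) * (δ / (1 + δ)) ^ (n - 1) * ∑ k, ‖a k‖
          ≤ (1 / (n : ℝ)) * (δ / (1 + δ)) ^ (n - 1) * (n * (C ^ (n - 1) * ‖s n‖)) :=
            mul_le_mul_of_nonneg_left hsum hfac
        _ = ((δ / (1 + δ)) * C) ^ (n - 1) * ‖s n‖ := by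
            rw [mul_pow]; field_simp
        _ = ‖s n‖ := by
            rw [hC, div_mul_div_comm, mul_comm δ (1 + δ), div_self (by positivity), one_pow,
              one_mul]
    · -- upper bound
      calc ‖∑ k, a k • u k‖ ≤ ∑ k, ‖a k • u k‖ := norm_sum_le _ _
        _ = ∑ k, ‖a k‖ := by
            apply Finset.sum_congr rfl
            intro k _
            rw [norm_smul, hu k, mul_one]
  refine ⟨hδle, ?_, hmain⟩
  -- dimension count
  have hli : LinearIndependent ℂ u := by
    rw [Fintype.linearIndependent_iff]
    intro g hg i
    have := (hmain g).1
    rw [hg, norm_zero] at this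
    have hfac : (0:ℝ) < (1 / (n : ℝ)) * (δ / (1 + δ)) ^ (n - 1) := by positivity
    have hsum0 : ∑ k, ‖g k‖ ≤ 0 := by
      by_contra h
      push_neg at h
      nlinarith
    have : ∀ k ∈ Finset.univ, ‖g k‖ = 0 := by
      intro k _
      have := Finset.sum_nonneg (fun k (_ : k ∈ Finset.univ) => norm_nonneg (g k))
      have heq : ∑ k, ‖g k‖ = 0 := le_antisymm hsum0 this
      exact (Finset.sum_eq_zero_iff_of_nonneg (fun k _ => norm_nonneg (g k))).mp heq k
        (Finset.mem_univ k)
    exact norm_eq_zero.mp (this i (Finset.mem_univ i))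
  intro k hk
  have hset : u '' {i : Fin n | (i : ℕ) < k} = Set.range (u ∘ Fin.castLE hk) := by
    ext x
    constructor
    · rintro ⟨i, hi, rfl⟩
      exact ⟨⟨i.val, hi⟩, by simp [Fin.castLE]⟩
    · rintro ⟨j, rfl⟩
      exact ⟨Fin.castLE hk j, j.isLt, rfl⟩
  rw [hset]
  rw [finrank_span_eq_card (hli.comp _ (Fin.castLE_injective hk))]
  simp
end
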